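/- Let f, c, ε be real constants with 0 < f < 1 and 0 < c < 1, let t be a positive integer, let m be an integer with 0 ≤ m ≤ t, and suppose 0 < ε < min{ log_{c/(2t)}(1−f), log_{c/4}(1/2) }. Let T be an ε-critical tournament with |T| = n, let S_1,…,S_t be pairwise vertex-disjoint transitive induced subtournaments of T with |S_i| ≥ f·tr(T) for i = 1,…,t, and let A_1, A_2 be disjoint subsets of V(T) \ (V(S_1) ∪ … ∪ V(S_t)) with |A_1| ≥ cn and |A_2| ≥ cn. Then: (1) there exist x ∈ A_1, y ∈ A_2 and s_i ∈ V(S_i) for i = 1,…,t such that (y,x) is an arc of T, (s_i,x) is an arc of T for i = 1,…,m, and (y,s_i) is an arc of T for i = m+1,…,t; (2) there exist p ∈ A_1, q ∈ A_2 and u_i ∈ V(S_i) for i = 1,…,t such that (q,u_i) is an arc of T for i = 1,…,m, (q,p) is an arc of T, and (p,u_i) is an arc of T for i = m+1,…,t; (3) there exist g ∈ A_1, v ∈ A_2 and z_i ∈ V(S_i) for i = 1,…,t such that (v,g) is an arc of T, (z_i,g) is an arc of T for i = 1,…,m, and (z_i,v) is an arc of T for i = m+1,…,t. -/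

import Mathlib

open Finset

/-- A tournament on vertex set `Fin n`: `adj u v` means there is an arc from `u` to `v`. -/
structure Tournament (n : ℕ) where
  adj : Fin n → Fin n → Prop
  asymm : ∀ u v, adj u v → ¬ adj v u
  total : ∀ u v, u ≠ v → adj u v ∨ adj v u

namespace Tournament

variable {n N : ℕ}

/-- The position of vertex `v` in the ordering `θ`, where `θ k` is the `k`-th vertex. -/
def pos (θ : Equiv.Perm (Fin n)) (v : Fin n) : Fin n := θ.symm v

/-- The arc `u → v` of `T` is a backward arc under the ordering `θ`. -/
def Backward (T : Tournament n) (θ : Equiv.Perm (Fin n)) (u v : Fin n) : Prop :=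
  T.adj u v ∧ pos θ v < pos θ u

/-- `x` lies strictly between two elements of `L` under the ordering `θ`. -/
def BetweenSet (θ : Equiv.Perm (Fin n)) (L : Finset (Fin n)) (x : Fin n) : Prop :=
  ∃ u ∈ L, ∃ w ∈ L, pos θ u < pos θ x ∧ pos θ x < pos θ w

/-- The induced subtournament of `T` on `s` is transitive. -/
def IsTransOn (T : Tournament n) (s : Finset (Fin n)) : Prop :=
  ∀ u ∈ s, ∀ v ∈ s, ∀ w ∈ s, T.adj u v → T.adj v w → T.adj u w

/-- The largest size of a transitive subtournament of `T` contained in `s`. -/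
noncomputable def trSizeOn (T : Tournament n) (s : Finset (Fin n)) : ℕ :=
  sSup {k | ∃ t, t ⊆ s ∧ T.IsTransOn t ∧ t.card = k}

/-- `tr(T)`: the largest size of a transitive subtournament of `T`. -/
noncomputable def trSize (T : Tournament n) : ℕ := T.trSizeOn Finset.univ

/-- `T` contains `H`: some induced subtournament of `T` is isomorphic to `H`. -/
def Contains (T : Tournament N) (H : Tournament n) : Prop :=
  ∃ f : Fin n ↪ Fin N, ∀ u v, H.adj u v ↔ T.adj (f u) (f v)

/-- `T` is `ε`-critical. -/
def EpsCritical (T : Tournament n) (ε : ℝ) : Prop :=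
  ((T.trSize : ℝ) < (n : ℝ) ^ ε) ∧
  ∀ s : Finset (Fin n), s ≠ Finset.univ → ((s.card : ℝ) ^ ε ≤ (T.trSizeOn s : ℝ))

/-- `S` with center `c` is a right star of `T` under `θ`. -/
def IsRightStarAt (T : Tournament n) (θ : Equiv.Perm (Fin n)) (S : Finset (Fin n))
    (c : Fin n) : Prop :=
  c ∈ S ∧ (S.erase c).Nonempty ∧
  (∀ v ∈ S.erase c, pos θ v < pos θ c ∧ T.adj c v) ∧
  (∀ u ∈ S, ∀ v ∈ S, T.Backward θ u v → u = c)

/-- `S` with center `c` is a left star of `T` under `θ`. -/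
def IsLeftStarAt (T : Tournament n) (θ : Equiv.Perm (Fin n)) (S : Finset (Fin n))
    (c : Fin n) : Prop :=
  c ∈ S ∧ (S.erase c).Nonempty ∧
  (∀ v ∈ S.erase c, pos θ c < pos θ v ∧ T.adj v c) ∧
  (∀ u ∈ S, ∀ v ∈ S, T.Backward θ u v → v = c)

/-- `S` with center `c` is a middle star of `T` under `θ`. -/
def IsMiddleStarAt (T : Tournament n) (θ : Equiv.Perm (Fin n)) (S : Finset (Fin n))
    (c : Fin n) : Prop :=
  c ∈ S ∧
  (∃ v ∈ S.erase c, pos θ v < pos θ c) ∧ (∃ v ∈ S.erase c, pos θ c < pos θ v) ∧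
  (∀ v ∈ S.erase c, (pos θ v < pos θ c → T.adj c v) ∧ (pos θ c < pos θ v → T.adj v c)) ∧
  (∀ u ∈ S, ∀ v ∈ S, T.Backward θ u v → u = c ∨ v = c)

def IsFrontierStarAt (T : Tournament n) (θ : Equiv.Perm (Fin n)) (S : Finset (Fin n))
    (c : Fin n) : Prop :=
  T.IsLeftStarAt θ S c ∨ T.IsRightStarAt θ S c

def IsStarAt (T : Tournament n) (θ : Equiv.Perm (Fin n)) (S : Finset (Fin n))
    (c : Fin n) : Prop :=
  T.IsLeftStarAt θ S c ∨ T.IsRightStarAt θ S c ∨ T.IsMiddleStarAt θ S c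

/-- A middle star with exactly one leaf after the center (center is `u_{p-1}`). -/
def IsOneRightMiddleStarAt (T : Tournament n) (θ : Equiv.Perm (Fin n)) (S : Finset (Fin n))
    (c : Fin n) : Prop :=
  T.IsMiddleStarAt θ S c ∧ ((S.erase c).filter (fun v => pos θ c < pos θ v)).card = 1

/-- A middle star with exactly one leaf before the center (center is `u_2`). -/
def IsOneLeftMiddleStarAt (T : Tournament n) (θ : Equiv.Perm (Fin n)) (S : Finset (Fin n))
    (c : Fin n) : Prop :=
  T.IsMiddleStarAt θ S c ∧ ((S.erase c).filter (fun v => pos θ v < pos θ c)).card = 1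

/-- Kinds of super 2-nebulas. -/
inductive NebKind
  | left
  | middle
  | right

/-- Common requirements on the data of a super 2-nebula: vertex set `S`, centers `c₁, c₂`
(`c₁` before `c₂` under `θ`), leaves `L₁` incident to `c₁` and `L₂` incident to `c₂`. -/
def Super2NebCommon (θ : Equiv.Perm (Fin n)) (S : Finset (Fin n)) (c₁ c₂ : Fin n)
    (L₁ L₂ : Finset (Fin n)) : Prop :=
  L₁.Nonempty ∧ L₂.Nonempty ∧ Disjoint L₁ L₂ ∧
  c₁ ∉ L₁ ∪ L₂ ∧ c₂ ∉ L₁ ∪ L₂ ∧ c₁ ≠ c₂ ∧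
  S = insert c₁ (insert c₂ (L₁ ∪ L₂)) ∧ pos θ c₁ < pos θ c₂

/-- `S` is a super (left/middle/right) 2-nebula of `T` under `θ`, with centers `c₁, c₂` and
leaves `L₁` (incident to `c₁`) and `L₂` (incident to `c₂`). -/
def IsSuper2NebulaAt (T : Tournament n) (θ : Equiv.Perm (Fin n)) (S : Finset (Fin n))
    (c₁ c₂ : Fin n) (L₁ L₂ : Finset (Fin n)) : NebKind → Prop
  | NebKind.middle =>
      Super2NebCommon θ S c₁ c₂ L₁ L₂ ∧
      (∀ v ∈ L₁ ∪ L₂, pos θ c₁ < pos θ v ∧ pos θ v < pos θ c₂) ∧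
      (∀ v ∈ L₁, T.adj v c₁) ∧ (∀ v ∈ L₂, T.adj c₂ v) ∧ T.adj c₂ c₁ ∧
      (∀ u ∈ S, ∀ v ∈ S, T.Backward θ u v →
        (u ∈ L₁ ∧ v = c₁) ∨ (u = c₂ ∧ v ∈ L₂) ∨ (u = c₂ ∧ v = c₁))
  | NebKind.left =>
      Super2NebCommon θ S c₁ c₂ L₁ L₂ ∧
      (∀ v ∈ L₁ ∪ L₂, pos θ v < pos θ c₁) ∧
      (∀ v ∈ L₁, T.adj c₁ v) ∧ (∀ v ∈ L₂, T.adj c₂ v) ∧ T.adj c₂ c₁ ∧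
      (∀ u ∈ S, ∀ v ∈ S, T.Backward θ u v →
        (u = c₁ ∧ v ∈ L₁) ∨ (u = c₂ ∧ v ∈ L₂) ∨ (u = c₂ ∧ v = c₁))
  | NebKind.right =>
      Super2NebCommon θ S c₁ c₂ L₁ L₂ ∧
      (∀ v ∈ L₁ ∪ L₂, pos θ c₂ < pos θ v) ∧
      (∀ v ∈ L₁, T.adj v c₁) ∧ (∀ v ∈ L₂, T.adj v c₂) ∧ T.adj c₂ c₁ ∧
      (∀ u ∈ S, ∀ v ∈ S, T.Backward θ u v →
        (u ∈ L₁ ∧ v = c₁) ∨ (u ∈ L₂ ∧ v = c₂) ∨ (u = c₂ ∧ v = c₁))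

/-- A decomposition of `T` witnessing that `T` is a super nebula under `θ`, with stars
`Q i` (centers `ctr i`) and super 2-nebulas `Sig i` (centers `c₁ i, c₂ i`, leaves
`L₁ i, L₂ i`, of kind `kd i`). -/
def SuperNebulaDecomp (T : Tournament n) (θ : Equiv.Perm (Fin n)) {m l : ℕ}
    (Q : Fin m → Finset (Fin n)) (ctr : Fin m → Fin n)
    (Sig : Fin l → Finset (Fin n)) (c₁ c₂ : Fin l → Fin n)
    (L₁ L₂ : Fin l → Finset (Fin n)) (kd : Fin l → NebKind) : Prop :=
  (∀ i, T.IsStarAt θ (Q i) (ctr i)) ∧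
  (∀ i, T.IsSuper2NebulaAt θ (Sig i) (c₁ i) (c₂ i) (L₁ i) (L₂ i) (kd i)) ∧
  (∀ i j, i ≠ j → Disjoint (Q i) (Q j)) ∧
  (∀ i j, i ≠ j → Disjoint (Sig i) (Sig j)) ∧
  (∀ i j, Disjoint (Q i) (Sig j)) ∧
  (∀ u v, T.Backward θ u v → (∃ i, u ∈ Q i ∧ v ∈ Q i) ∨ (∃ i, u ∈ Sig i ∧ v ∈ Sig i)) ∧
  (∀ i j, ¬ BetweenSet θ (L₁ j ∪ L₂ j) (ctr i)) ∧
  (∀ i j, i ≠ j → ¬ BetweenSet θ (L₁ j ∪ L₂ j) (c₁ i) ∧ ¬ BetweenSet θ (L₁ j ∪ L₂ j) (c₂ i))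

/-- `T` is a super nebula. -/
def IsSuperNebula (T : Tournament n) : Prop :=
  ∃ (θ : Equiv.Perm (Fin n)) (m l : ℕ) (Q : Fin m → Finset (Fin n)) (ctr : Fin m → Fin n)
    (Sig : Fin l → Finset (Fin n)) (c₁ c₂ : Fin l → Fin n)
    (L₁ L₂ : Fin l → Finset (Fin n)) (kd : Fin l → NebKind),
    SuperNebulaDecomp T θ Q ctr Sig c₁ c₂ L₁ L₂ kd

/-- `{a, b, c}` (in this position order) is a triangle of `T` under `θ`:
`a` is the left exterior, `b` the center, `c` the right exterior. -/
def IsTriangleAt (T : Tournament n) (θ : Equiv.Perm (Fin n)) (a b c : Fin n) : Prop :=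
  pos θ a < pos θ b ∧ pos θ b < pos θ c ∧ T.adj b a ∧ T.adj c a ∧ T.adj c b

/-- A decomposition of `T` under `θ` into triangles `{A i, B i, C i}` (left exterior, center,
right exterior) and frontier stars `Q j` with centers `ctr j`, where for each triangle `i`,
the vertices in `forb i` are not allowed to lie between leaves of a star. -/
def TriGalaxyDecomp (T : Tournament n) (θ : Equiv.Perm (Fin n)) {l k : ℕ}
    (A B C : Fin l → Fin n) (Q : Fin k → Finset (Fin n)) (ctr : Fin k → Fin n)
    (forb : Fin l → Finset (Fin n)) : Prop :=
  (∀ i, T.IsTriangleAt θ (A i) (B i) (C i)) ∧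
  (∀ j, T.IsFrontierStarAt θ (Q j) (ctr j)) ∧
  (∀ i j, i ≠ j →
    Disjoint ({A i, B i, C i} : Finset (Fin n)) ({A j, B j, C j} : Finset (Fin n))) ∧
  (∀ i j, Disjoint ({A i, B i, C i} : Finset (Fin n)) (Q j)) ∧
  (∀ i j, i ≠ j → Disjoint (Q i) (Q j)) ∧
  (∀ u v, T.Backward θ u v →
    (∃ i, u ∈ ({A i, B i, C i} : Finset (Fin n)) ∧ v ∈ ({A i, B i, C i} : Finset (Fin n))) ∨
    (∃ j, u ∈ Q j ∧ v ∈ Q j)) ∧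
  (∀ i j, i ≠ j → ¬ BetweenSet θ ((Q j).erase (ctr j)) (ctr i)) ∧
  (∀ i j, ∀ x ∈ forb i, ¬ BetweenSet θ ((Q j).erase (ctr j)) x)

/-- `T` is a Δgalaxy: a triangular galaxy with exactly one triangle. -/
def IsDeltaGalaxy (T : Tournament n) : Prop :=
  ∃ (θ : Equiv.Perm (Fin n)) (a b c : Fin n) (k : ℕ)
    (Q : Fin k → Finset (Fin n)) (ctr : Fin k → Fin n),
    TriGalaxyDecomp T θ (fun _ : Fin 1 => a) (fun _ => b) (fun _ => c) Q ctr
      (fun _ => ({a, b, c} : Finset (Fin n)))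

/-- `T` is a central triangular galaxy: centers of triangles may lie between leaves of stars. -/
def IsCentralTriangularGalaxy (T : Tournament n) : Prop :=
  ∃ (θ : Equiv.Perm (Fin n)) (l k : ℕ) (A B C : Fin l → Fin n)
    (Q : Fin k → Finset (Fin n)) (ctr : Fin k → Fin n),
    TriGalaxyDecomp T θ A B C Q ctr (fun i => ({A i, C i} : Finset (Fin n)))

/-- `T` is a left triangular galaxy: left exteriors of triangles may lie between leaves. -/
def IsLeftTriangularGalaxy (T : Tournament n) : Prop :=
  ∃ (θ : Equiv.Perm (Fin n)) (l k : ℕ) (A B C : Fin l → Fin n)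
    (Q : Fin k → Finset (Fin n)) (ctr : Fin k → Fin n),
    TriGalaxyDecomp T θ A B C Q ctr (fun i => ({B i, C i} : Finset (Fin n)))

/-- `T` is a right triangular galaxy: right exteriors of triangles may lie between leaves. -/
def IsRightTriangularGalaxy (T : Tournament n) : Prop :=
  ∃ (θ : Equiv.Perm (Fin n)) (l k : ℕ) (A B C : Fin l → Fin n)
    (Q : Fin k → Finset (Fin n)) (ctr : Fin k → Fin n),
    TriGalaxyDecomp T θ A B C Q ctr (fun i => ({A i, B i} : Finset (Fin n)))

/-- A decomposition of `T` witnessing that `T` is a nebula under `θ` (no condition on the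
location of the centers of the stars). -/
def NebulaDecomp (T : Tournament n) (θ : Equiv.Perm (Fin n)) {k : ℕ}
    (Q : Fin k → Finset (Fin n)) (ctr : Fin k → Fin n) : Prop :=
  (∀ i, T.IsStarAt θ (Q i) (ctr i)) ∧
  (∀ i j, i ≠ j → Disjoint (Q i) (Q j)) ∧
  (∀ u v, T.Backward θ u v → ∃ i, u ∈ Q i ∧ v ∈ Q i)

/-- `T` is a central nebula: a nebula all of whose stars are 3-vertex middle stars. -/
def IsCentralNebula (T : Tournament n) : Prop :=
  ∃ (θ : Equiv.Perm (Fin n)) (k : ℕ) (Q : Fin k → Finset (Fin n)) (ctr : Fin k → Fin n),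
    NebulaDecomp T θ Q ctr ∧ ∀ i, T.IsMiddleStarAt θ (Q i) (ctr i) ∧ (Q i).card = 3

/-- `T` is a super left nebula: a nebula all of whose stars are left stars. -/
def IsSuperLeftNebula (T : Tournament n) : Prop :=
  ∃ (θ : Equiv.Perm (Fin n)) (k : ℕ) (Q : Fin k → Finset (Fin n)) (ctr : Fin k → Fin n),
    NebulaDecomp T θ Q ctr ∧ ∀ i, T.IsLeftStarAt θ (Q i) (ctr i)

/-- `T` is a super right nebula: a nebula all of whose stars are right stars. -/
def IsSuperRightNebula (T : Tournament n) : Prop :=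
  ∃ (θ : Equiv.Perm (Fin n)) (k : ℕ) (Q : Fin k → Finset (Fin n)) (ctr : Fin k → Fin n),
    NebulaDecomp T θ Q ctr ∧ ∀ i, T.IsRightStarAt θ (Q i) (ctr i)

/-- `T` is an LR-Δgalaxy: a super Δgalaxy in which only the two exteriors of the triangle
may lie between leaves of a star. -/
def IsLRDeltaGalaxy (T : Tournament n) : Prop :=
  ∃ (θ : Equiv.Perm (Fin n)) (a b c : Fin n) (k : ℕ)
    (Q : Fin k → Finset (Fin n)) (ctr : Fin k → Fin n),
    TriGalaxyDecomp T θ (fun _ : Fin 1 => a) (fun _ => b) (fun _ => c) Q ctr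
      (fun _ => ({b} : Finset (Fin n)))

/-- `T` is a CR-Δgalaxy. -/
def IsCRDeltaGalaxy (T : Tournament n) : Prop :=
  ∃ (θ : Equiv.Perm (Fin n)) (a b c : Fin n) (k : ℕ)
    (Q : Fin k → Finset (Fin n)) (ctr : Fin k → Fin n),
    TriGalaxyDecomp T θ (fun _ : Fin 1 => a) (fun _ => b) (fun _ => c) Q ctr
      (fun _ => ({a} : Finset (Fin n))) ∧
    (∀ i j, i ≠ j → BetweenSet θ ((Q i).erase (ctr i)) b →
      BetweenSet θ ((Q j).erase (ctr j)) c →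
      (∀ x ∈ (Q i).erase (ctr i), ¬ BetweenSet θ ((Q j).erase (ctr j)) x) ∧
      (∀ x ∈ (Q j).erase (ctr j), ¬ BetweenSet θ ((Q i).erase (ctr i)) x)) ∧
    (∀ i, BetweenSet θ ((Q i).erase (ctr i)) b → ¬ BetweenSet θ ((Q i).erase (ctr i)) c)

/-- `T` is a CL-Δgalaxy. -/
def IsCLDeltaGalaxy (T : Tournament n) : Prop :=
  ∃ (θ : Equiv.Perm (Fin n)) (a b c : Fin n) (k : ℕ)
    (Q : Fin k → Finset (Fin n)) (ctr : Fin k → Fin n),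
    TriGalaxyDecomp T θ (fun _ : Fin 1 => a) (fun _ => b) (fun _ => c) Q ctr
      (fun _ => ({c} : Finset (Fin n))) ∧
    (∀ i j, i ≠ j → BetweenSet θ ((Q i).erase (ctr i)) b →
      BetweenSet θ ((Q j).erase (ctr j)) a →
      (∀ x ∈ (Q i).erase (ctr i), ¬ BetweenSet θ ((Q j).erase (ctr j)) x) ∧
      (∀ x ∈ (Q j).erase (ctr j), ¬ BetweenSet θ ((Q i).erase (ctr i)) x)) ∧
    (∀ i, BetweenSet θ ((Q i).erase (ctr i)) b → ¬ BetweenSet θ ((Q i).erase (ctr i)) a)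

/-- A decomposition of `T` under `θ` into one super 2-nebula (of kind `kd`) and frontier
stars, covering all of `V(T)`, witnessing that `T` is a Σ-galaxy under `θ`. -/
def SigmaGalaxyDecomp (T : Tournament n) (θ : Equiv.Perm (Fin n))
    (S : Finset (Fin n)) (c₁ c₂ : Fin n) (L₁ L₂ : Finset (Fin n)) (kd : NebKind)
    {m : ℕ} (Q : Fin m → Finset (Fin n)) (ctr : Fin m → Fin n) : Prop :=
  T.IsSuper2NebulaAt θ S c₁ c₂ L₁ L₂ kd ∧
  (∀ j, T.IsFrontierStarAt θ (Q j) (ctr j)) ∧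
  (∀ i j, i ≠ j → Disjoint (Q i) (Q j)) ∧
  (∀ j, Disjoint S (Q j)) ∧
  (∀ v, v ∈ S ∨ ∃ j, v ∈ Q j) ∧
  (∀ u v, T.Backward θ u v → (u ∈ S ∧ v ∈ S) ∨ ∃ j, u ∈ Q j ∧ v ∈ Q j) ∧
  (∀ j, ¬ BetweenSet θ (L₁ ∪ L₂) (ctr j)) ∧
  (∀ j, ¬ BetweenSet θ ((Q j).erase (ctr j)) c₁ ∧ ¬ BetweenSet θ ((Q j).erase (ctr j)) c₂) ∧
  (∀ i j, i ≠ j → ¬ BetweenSet θ ((Q j).erase (ctr j)) (ctr i))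

def IsMiddleSigmaGalaxy (T : Tournament n) : Prop :=
  ∃ (θ : Equiv.Perm (Fin n)) (S : Finset (Fin n)) (c₁ c₂ : Fin n) (L₁ L₂ : Finset (Fin n))
    (m : ℕ) (Q : Fin m → Finset (Fin n)) (ctr : Fin m → Fin n),
    SigmaGalaxyDecomp T θ S c₁ c₂ L₁ L₂ NebKind.middle Q ctr

def IsLeftSigmaGalaxy (T : Tournament n) : Prop :=
  ∃ (θ : Equiv.Perm (Fin n)) (S : Finset (Fin n)) (c₁ c₂ : Fin n) (L₁ L₂ : Finset (Fin n))
    (m : ℕ) (Q : Fin m → Finset (Fin n)) (ctr : Fin m → Fin n),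
    SigmaGalaxyDecomp T θ S c₁ c₂ L₁ L₂ NebKind.left Q ctr

def IsRightSigmaGalaxy (T : Tournament n) : Prop :=
  ∃ (θ : Equiv.Perm (Fin n)) (S : Finset (Fin n)) (c₁ c₂ : Fin n) (L₁ L₂ : Finset (Fin n))
    (m : ℕ) (Q : Fin m → Finset (Fin n)) (ctr : Fin m → Fin n),
    SigmaGalaxyDecomp T θ S c₁ c₂ L₁ L₂ NebKind.right Q ctr

/-- The directed density from `X` to `Y`. -/
noncomputable def density (T : Tournament n) (X Y : Finset (Fin n)) : ℝ :=
  (Set.ncard {p : Fin n × Fin n | p.1 ∈ X ∧ p.2 ∈ Y ∧ T.adj p.1 p.2} : ℝ) /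
    ((X.card : ℝ) * (Y.card : ℝ))

/-- `(S i)` is a smooth `(c, lam, w)`-structure of `T`. -/
def IsSmoothStructure (T : Tournament n) (c lam : ℝ) {N : ℕ} (w : Fin N → Bool)
    (S : Fin N → Finset (Fin n)) : Prop :=
  (∀ i j, i ≠ j → Disjoint (S i) (S j)) ∧
  (∀ i, w i = false → c * (n : ℝ) ≤ ((S i).card : ℝ)) ∧
  (∀ i, w i = true → T.IsTransOn (S i) ∧ c * (T.trSize : ℝ) ≤ ((S i).card : ℝ)) ∧
  (∀ i j, i < j →
    (∀ v ∈ S i, 1 - lam ≤ T.density {v} (S j)) ∧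
    (∀ v ∈ S j, 1 - lam ≤ T.density (S i) {v}))

end Tournament

/-- The backward arcs of `K₆` under its canonical ordering. -/
def K6back : List (ℕ × ℕ) := [(3, 0), (5, 2), (5, 0), (4, 1)]

/-- The tournament `K₆`, on `Fin 6` with its canonical ordering. -/
def K6 : Tournament 6 where
  adj u v := (u.val, v.val) ∈ K6back ∨ (u < v ∧ (v.val, u.val) ∉ K6back)
  asymm := by decide
  total := by decide

/-- The pair `{H₁, H₂}` satisfies the Erdős–Hajnal conjecture: there is `ε > 0` such that
every `{H₁, H₂}`-free tournament `T` has a transitive subtournament of size `≥ |T| ^ ε`. -/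
def EHPair {n₁ n₂ : ℕ} (H₁ : Tournament n₁) (H₂ : Tournament n₂) : Prop :=
  ∃ ε : ℝ, 0 < ε ∧ ∀ (n : ℕ) (T : Tournament n),
    ¬ T.Contains H₁ → ¬ T.Contains H₂ → (n : ℝ) ^ ε ≤ (T.trSize : ℝ)

open Tournament

/-! Each `S i` is a large transitive set, so by criticality any large set sending all its arcs
to `S i` (or receiving all arcs from it) would combine with `S i` into a transitive
subtournament larger than `tr(T)`. Hence in `A₁` and `A₂` only few vertices fail to have the
required in- or out-neighbour in some `S i`, and at least half of each set survives. Two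
disjoint sets of size `cn/2` cannot have all arcs pointing one way, again by criticality, which
yields the arc between the survivors. The two bounds on `ε` say precisely
`1 - f < (c / (2t)) ^ ε` and `1 / 2 < (c / 4) ^ ε`, which is what both applications of
criticality need. -/

theorem Finset.card_le_card_sdiff_biUnion_add_sum {α ι : Type*} [DecidableEq α] [Fintype ι]
    (A : Finset α) (B : ι → Finset α) :
    #A ≤ #(A \ univ.biUnion B) + ∑ i, #(B i) :=
  card_le_card_sdiff_add_card.trans (Nat.add_le_add_left card_biUnion_le _)

namespace Tournament

variable {n : ℕ} {T : Tournament n}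

theorem IsTransOn.union {D E : Finset (Fin n)} (hD : T.IsTransOn D) (hE : T.IsTransOn E)
    (hDE : ∀ d ∈ D, ∀ e ∈ E, T.adj d e) : T.IsTransOn (D ∪ E) := by
  intro u hu v hv w hw huv hvw
  simp only [mem_union] at hu hv hw
  rcases hu with hu | hu <;> rcases hv with hv | hv <;> rcases hw with hw | hw
  · exact hD u hu v hv w hw huv hvw
  · exact hDE u hu w hw
  · exact absurd hvw (T.asymm w v (hDE w hw v hv))
  · exact hDE u hu w hw
  · exact absurd huv (T.asymm v u (hDE v hv u hu))
  · exact absurd huv (T.asymm v u (hDE v hv u hu))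
  · exact absurd hvw (T.asymm w v (hDE w hw v hv))
  · exact hE u hu v hv w hw huv hvw

variable (T) in
theorem bddAbove_card_isTransOn (s : Finset (Fin n)) :
    BddAbove {k | ∃ u, u ⊆ s ∧ T.IsTransOn u ∧ #u = k} :=
  ⟨n, by rintro k ⟨u, -, -, rfl⟩; simpa using card_le_univ u⟩

theorem card_le_trSizeOn {s u : Finset (Fin n)} (hus : u ⊆ s) (hu : T.IsTransOn u) :
    #u ≤ T.trSizeOn s :=
  le_csSup (bddAbove_card_isTransOn T s) ⟨u, hus, hu, rfl⟩

variable (T) in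
theorem exists_isTransOn_card_eq_trSizeOn (s : Finset (Fin n)) :
    ∃ u, u ⊆ s ∧ T.IsTransOn u ∧ #u = T.trSizeOn s :=
  Nat.sSup_mem (s := {k | ∃ u, u ⊆ s ∧ T.IsTransOn u ∧ #u = k})
    ⟨0, ∅, empty_subset s, by simp [IsTransOn], card_empty⟩
    (bddAbove_card_isTransOn T s)

theorem trSizeOn_add_trSizeOn_le_trSize {X Y : Finset (Fin n)} (hXY : Disjoint X Y)
    (h : ∀ x ∈ X, ∀ y ∈ Y, T.adj x y) : T.trSizeOn X + T.trSizeOn Y ≤ T.trSize := by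
  obtain ⟨D, hDX, hD, hDcard⟩ := exists_isTransOn_card_eq_trSizeOn T X
  obtain ⟨E, hEY, hE, hEcard⟩ := exists_isTransOn_card_eq_trSizeOn T Y
  rw [← hDcard, ← hEcard, ← card_union_of_disjoint (disjoint_of_subset_left hDX
    (disjoint_of_subset_right hEY hXY))]
  exact card_le_trSizeOn (subset_univ _) (hD.union hE fun d hd e he => h d (hDX hd) e (hEY he))

variable (T) in
theorem one_le_trSize (hn : 0 < n) : 1 ≤ T.trSize :=
  card_le_trSizeOn (u := {⟨0, hn⟩}) (subset_univ _) (by simp +contextual [IsTransOn])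

section EpsCritical

variable {ε : ℝ}

theorem EpsCritical.pos (hT : T.EpsCritical ε) (hε : 0 < ε) : 0 < n := by
  rcases Nat.eq_zero_or_pos n with rfl | hn
  · have := hT.1
    rw [Nat.cast_zero, Real.zero_rpow hε.ne'] at this
    exact absurd this (Nat.cast_nonneg _).not_gt
  · exact hn

theorem EpsCritical.card_lt_of_dominates (hT : T.EpsCritical ε) (hε : 0 ≤ ε) {f b : ℝ}
    (hf : f < 1) (hb : 0 ≤ b) (hfb : 1 - f < b ^ ε) {S W : Finset (Fin n)}
    (hS : T.IsTransOn S) (hSne : S.Nonempty) (hScard : f * T.trSize ≤ #S)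
    (hWS : Disjoint W S)
    (hdom : (∀ x ∈ W, ∀ s ∈ S, T.adj x s) ∨ (∀ x ∈ W, ∀ s ∈ S, T.adj s x)) :
    (#W : ℝ) < b * n := by
  by_contra! hW
  obtain ⟨s, hs⟩ := hSne
  have hWuniv : W ≠ univ := fun h => disjoint_left.mp hWS (h ▸ mem_univ s) hs
  have hsum : T.trSizeOn W + #S ≤ T.trSize := by
    refine le_trans (Nat.add_le_add_left (card_le_trSizeOn subset_rfl hS) _) ?_
    rcases hdom with hdom | hdom
    · exact trSizeOn_add_trSizeOn_le_trSize hWS hdom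
    · rw [add_comm]
      exact trSizeOn_add_trSizeOn_le_trSize hWS.symm fun x hx y hy => hdom y hy x hx
  have hsumR : (T.trSizeOn W : ℝ) + #S ≤ T.trSize := by exact_mod_cast hsum
  have hnε : 0 < (n : ℝ) ^ ε := Real.rpow_pos_of_pos (Nat.cast_pos.mpr s.pos) ε
  refine lt_irrefl _ <| calc (T.trSize : ℝ) * (1 - f) ≤ n ^ ε * (1 - f) := mul_le_mul_of_nonneg_right hT.1.le (by linarith)
    _ < n ^ ε * b ^ ε := by gcongr
    _ = (b * n) ^ ε := by rw [Real.mul_rpow hb (Nat.cast_nonneg n), mul_comm]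
    _ ≤ (#W : ℝ) ^ ε := Real.rpow_le_rpow (by positivity) hW hε
    _ ≤ T.trSizeOn W := hT.2 W hWuniv
    _ ≤ T.trSize * (1 - f) := by linarith

theorem EpsCritical.exists_adj_of_le_card (hT : T.EpsCritical ε) (hε : 0 < ε) {b : ℝ}
    (hb : 0 < b) (hb2 : 1 / 2 < b ^ ε) {X Y : Finset (Fin n)} (hXY : Disjoint X Y)
    (hX : b * n ≤ #X) (hY : b * n ≤ #Y) : ∃ x ∈ X, ∃ y ∈ Y, T.adj y x := by
  by_contra! h
  have hnR : (0 : ℝ) < n := Nat.cast_pos.mpr (hT.pos hε)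
  have hnε : 0 < (n : ℝ) ^ ε := Real.rpow_pos_of_pos hnR ε
  have hne : ∀ Z : Finset (Fin n), b * n ≤ #Z → Z.Nonempty := fun Z hZ =>
    card_pos.mp (by exact_mod_cast (mul_pos hb hnR).trans_le hZ)
  have hlarge : ∀ Z : Finset (Fin n), Z ≠ univ → b * n ≤ #Z → (n : ℝ) ^ ε / 2 < T.trSizeOn Z :=
    fun Z hZ hZcard => calc
      (n : ℝ) ^ ε / 2 < b ^ ε * n ^ ε := by linarith [mul_lt_mul_of_pos_right hb2 hnε]
      _ = (b * n) ^ ε := (Real.mul_rpow hb.le hnR.le).symm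
      _ ≤ (#Z : ℝ) ^ ε := Real.rpow_le_rpow (by positivity) hZcard hε.le
      _ ≤ T.trSizeOn Z := hT.2 Z hZ
  obtain ⟨x, hx⟩ := hne X hX
  obtain ⟨y, hy⟩ := hne Y hY
  have hXuniv : X ≠ univ := fun hU => disjoint_left.mp hXY (hU ▸ mem_univ y) hy
  have hYuniv : Y ≠ univ := fun hU => disjoint_left.mp hXY hx (hU ▸ mem_univ x)
  have hsum : (T.trSizeOn X : ℝ) + T.trSizeOn Y ≤ T.trSize := by
    exact_mod_cast trSizeOn_add_trSizeOn_le_trSize hXY fun x hx y hy =>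
      (T.total x y (disjoint_left.mp hXY hx <| · ▸ hy)).resolve_right (h x hx y hy)
  linarith [hlarge X hXuniv hX, hlarge Y hYuniv hY, hT.1]

/-- Since `R` is the arc relation of `T` or its reverse, the vertices of `A` with no
`R`-neighbour in `S i` dominate `S i` or are dominated by it, so there are fewer than `b n`
of them. -/
theorem EpsCritical.exists_subset_forall_exists_rel (hT : T.EpsCritical ε) (hε : 0 ≤ ε)
    {f b : ℝ} (hf : f < 1) (hb : 0 ≤ b) (hfb : 1 - f < b ^ ε) {t : ℕ}
    {S : Fin t → Finset (Fin n)} (hS : ∀ i, T.IsTransOn (S i)) (hSne : ∀ i, (S i).Nonempty)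
    (hScard : ∀ i, f * T.trSize ≤ #(S i)) {A : Finset (Fin n)} (hAS : ∀ i, Disjoint A (S i))
    (P : Fin t → Prop) {R : Fin n → Fin n → Prop} (hR : R = T.adj ∨ R = flip T.adj) :
    ∃ F ⊆ A, (#A : ℝ) - t * (b * n) ≤ #F ∧ ∀ x ∈ F, ∀ i, P i → ∃ s ∈ S i, R x s := by
  classical
  set B : Fin t → Finset (Fin n) := fun i => A.filter fun x => P i ∧ ¬ ∃ s ∈ S i, R x s
  have hB : ∀ i, (#(B i) : ℝ) < b * n := by
    intro i
    have hBS : Disjoint (B i) (S i) := disjoint_of_subset_left (filter_subset _ _) (hAS i)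
    have hno : ∀ x ∈ B i, ∀ s ∈ S i, x ≠ s ∧ ¬ R x s := fun x hx s hs =>
      ⟨(disjoint_left.mp hBS hx <| · ▸ hs), fun hR => (mem_filter.mp hx).2.2 ⟨s, hs, hR⟩⟩
    refine hT.card_lt_of_dominates hε hf hb hfb (hS i) (hSne i) (hScard i) hBS ?_
    rcases hR with rfl | rfl
    · exact .inr fun x hx s hs => (T.total s x (hno x hx s hs).1.symm).resolve_right
        (hno x hx s hs).2
    · exact .inl fun x hx s hs => (T.total x s (hno x hx s hs).1).resolve_right
        (hno x hx s hs).2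
  refine ⟨A \ univ.biUnion B, sdiff_subset, ?_, fun x hx i hi => ?_⟩
  · have hcount : (#A : ℝ) ≤ #(A \ univ.biUnion B) + ∑ i, (#(B i) : ℝ) := by
      exact_mod_cast card_le_card_sdiff_biUnion_add_sum A B
    have hsum : ∑ i, (#(B i) : ℝ) ≤ t * (b * n) := by
      simpa using sum_le_sum fun i (_ : i ∈ univ) => (hB i).le
    linarith
  · simp only [mem_sdiff, mem_biUnion, mem_univ, true_and, B, mem_filter] at hx
    by_contra hnot
    exact hx.2 ⟨i, hx.1, hi, hnot⟩

end EpsCritical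

end Tournament

theorem stmt12_general (f c ε : ℝ) (hf : 0 < f ∧ f < 1) (hc : 0 < c ∧ c < 1)
    (t : ℕ) (ht : 0 < t) (m : ℕ) (hε : 0 < ε)
    (hε1 : ε < Real.logb (c / (2 * (t : ℝ))) (1 - f))
    (hε2 : ε < Real.logb (c / 4) (1 / 2))
    {n : ℕ} (T : Tournament n) (hT : T.EpsCritical ε)
    (S : Fin t → Finset (Fin n))
    (htrans : ∀ i, T.IsTransOn (S i))
    (hcard : ∀ i, f * (T.trSize : ℝ) ≤ ((S i).card : ℝ))
    (A₁ A₂ : Finset (Fin n)) (hA₁₂ : Disjoint A₁ A₂)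
    (hA₁S : ∀ i, Disjoint A₁ (S i)) (hA₂S : ∀ i, Disjoint A₂ (S i))
    (hA₁ : c * (n : ℝ) ≤ (A₁.card : ℝ)) (hA₂ : c * (n : ℝ) ≤ (A₂.card : ℝ)) :
    (∃ x ∈ A₁, ∃ y ∈ A₂, T.adj y x ∧
      (∀ i : Fin t, i.val < m → ∃ s ∈ S i, T.adj s x) ∧
      (∀ i : Fin t, m ≤ i.val → ∃ s ∈ S i, T.adj y s)) ∧
    (∃ p ∈ A₁, ∃ q ∈ A₂, T.adj q p ∧
      (∀ i : Fin t, i.val < m → ∃ u ∈ S i, T.adj q u) ∧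
      (∀ i : Fin t, m ≤ i.val → ∃ u ∈ S i, T.adj p u)) ∧
    (∃ g ∈ A₁, ∃ v ∈ A₂, T.adj v g ∧
      (∀ i : Fin t, i.val < m → ∃ z ∈ S i, T.adj z g) ∧
      (∀ i : Fin t, m ≤ i.val → ∃ z ∈ S i, T.adj z v)) := by
  have htR : (1 : ℝ) ≤ t := Nat.one_le_cast.mpr ht
  have hb₁ : 0 < c / (2 * t) := div_pos hc.1 (by linarith)
  have hfb : 1 - f < (c / (2 * t)) ^ ε :=
    (Real.lt_logb_iff_rpow_lt_of_base_lt_one hb₁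
      ((div_lt_one (by linarith)).mpr (by linarith)) (by linarith)).mp hε1
  have hb₂ : 1 / 2 < (c / 2) ^ ε :=
    ((Real.lt_logb_iff_rpow_lt_of_base_lt_one (by linarith) (by linarith) one_half_pos).mp
      hε2).trans_le (Real.rpow_le_rpow (by linarith) (by linarith) hε.le)
  have hSne : ∀ i, (S i).Nonempty := fun i => card_pos.mp <| by
    have := T.one_le_trSize (hT.pos hε)
    exact_mod_cast (mul_pos hf.1 (by exact_mod_cast this)).trans_le (hcard i)
  have hhalf : t * (c / (2 * t) * n) = c / 2 * n := by field_simp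
  have good : ∀ A : Finset (Fin n), (∀ i, Disjoint A (S i)) → c * n ≤ #A →
      ∀ (P : Fin t → Prop) (R : Fin n → Fin n → Prop), (R = T.adj ∨ R = flip T.adj) →
      ∃ F ⊆ A, c / 2 * n ≤ #F ∧ ∀ x ∈ F, ∀ i, P i → ∃ s ∈ S i, R x s := by
    intro A hAS hA P R hR
    obtain ⟨F, hFA, hF, hFgood⟩ := hT.exists_subset_forall_exists_rel hε.le hf.2 hb₁.le hfb
      htrans hSne hcard hAS P hR
    exact ⟨F, hFA, by linarith, hFgood⟩
  have arc : ∀ X ⊆ A₁, ∀ Y ⊆ A₂, c / 2 * n ≤ #X → c / 2 * n ≤ #Y → ∃ x ∈ X, ∃ y ∈ Y, T.adj y x :=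
    fun X hX Y hY => hT.exists_adj_of_le_card hε (by linarith) hb₂
      (disjoint_of_subset_left hX (disjoint_of_subset_right hY hA₁₂))
  obtain ⟨F₁, hF₁, hF₁c, hF₁g⟩ := good A₁ hA₁S hA₁ (fun i => i.val < m) _ (.inr rfl)
  obtain ⟨F₂, hF₂, hF₂c, hF₂g⟩ := good A₂ hA₂S hA₂ (fun i => m ≤ i.val) _ (.inl rfl)
  obtain ⟨F₃, hF₃, hF₃c, hF₃g⟩ := good A₁ hA₁S hA₁ (fun i => m ≤ i.val) _ (.inl rfl)
  obtain ⟨F₄, hF₄, hF₄c, hF₄g⟩ := good A₂ hA₂S hA₂ (fun i => i.val < m) _ (.inl rfl)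
  obtain ⟨F₅, hF₅, hF₅c, hF₅g⟩ := good A₂ hA₂S hA₂ (fun i => m ≤ i.val) _ (.inr rfl)
  obtain ⟨x, hx, y, hy, hyx⟩ := arc F₁ hF₁ F₂ hF₂ hF₁c hF₂c
  obtain ⟨p, hp, q, hq, hqp⟩ := arc F₃ hF₃ F₄ hF₄ hF₃c hF₄c
  obtain ⟨g, hg, v, hv, hvg⟩ := arc F₁ hF₁ F₅ hF₅ hF₁c hF₅c
  exact ⟨⟨x, hF₁ hx, y, hF₂ hy, hyx, hF₁g x hx, hF₂g y hy⟩,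
    ⟨p, hF₃ hp, q, hF₄ hq, hqp, hF₄g q hq, hF₃g p hp⟩,
    ⟨g, hF₁ hg, v, hF₅ hv, hvg, hF₁g g hg, hF₅g v hv⟩⟩

theorem stmt12 (f c ε : ℝ) (hf : 0 < f ∧ f < 1) (hc : 0 < c ∧ c < 1)
    (t : ℕ) (ht : 0 < t) (m : ℕ) (hm : m ≤ t) (hε : 0 < ε)
    (hε1 : ε < Real.logb (c / (2 * (t : ℝ))) (1 - f))
    (hε2 : ε < Real.logb (c / 4) (1 / 2))
    {n : ℕ} (T : Tournament n) (hT : T.EpsCritical ε)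
    (S : Fin t → Finset (Fin n)) (hdisj : ∀ i j, i ≠ j → Disjoint (S i) (S j))
    (htrans : ∀ i, T.IsTransOn (S i))
    (hcard : ∀ i, f * (T.trSize : ℝ) ≤ ((S i).card : ℝ))
    (A₁ A₂ : Finset (Fin n)) (hA₁₂ : Disjoint A₁ A₂)
    (hA₁S : ∀ i, Disjoint A₁ (S i)) (hA₂S : ∀ i, Disjoint A₂ (S i))
    (hA₁ : c * (n : ℝ) ≤ (A₁.card : ℝ)) (hA₂ : c * (n : ℝ) ≤ (A₂.card : ℝ)) :
    (∃ x ∈ A₁, ∃ y ∈ A₂, T.adj y x ∧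
      (∀ i : Fin t, i.val < m → ∃ s ∈ S i, T.adj s x) ∧
      (∀ i : Fin t, m ≤ i.val → ∃ s ∈ S i, T.adj y s)) ∧
    (∃ p ∈ A₁, ∃ q ∈ A₂, T.adj q p ∧
      (∀ i : Fin t, i.val < m → ∃ u ∈ S i, T.adj q u) ∧
      (∀ i : Fin t, m ≤ i.val → ∃ u ∈ S i, T.adj p u)) ∧
    (∃ g ∈ A₁, ∃ v ∈ A₂, T.adj v g ∧
      (∀ i : Fin t, i.val < m → ∃ z ∈ S i, T.adj z g) ∧
      (∀ i : Fin t, m ≤ i.val → ∃ z ∈ S i, T.adj z v)) :=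
  stmt12_general f c ε hf hc t ht m hε hε1 hε2 T hT S htrans hcard A₁ A₂ hA₁₂ hA₁S hA₂S hA₁ hA₂
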